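/- arXiv:1508.01950 — 4 statements merged into one kernel-verified Lean document; each statement's English description precedes it below -/
import Mathlib

section
/- In any Nash Equilibrium (m, p) of the simplified game with deterministic attack times, for every node i: m_i ≤ r_i/(r_i·w_i + C_i^A) and p_i ≥ C_i^D/(r_i·w_i). -/
/-- Defender feasibility: `∑ m_i ≤ B` and `0 ≤ m_i ≤ 1 / w_i`. -/
def DefFeasible {N : ℕ} (w : Fin N → ℝ) (B : ℝ) (m : Fin N → ℝ) : Prop :=
  (∑ i, m i ≤ B) ∧ ∀ i, 0 ≤ m i ∧ m i ≤ 1 / w i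

/-- Attacker feasibility: `∑ m_i w_i p_i ≤ M` and `p_i ∈ [0,1]`. -/
def AtkFeasible {N : ℕ} (w : Fin N → ℝ) (M : ℝ) (m p : Fin N → ℝ) : Prop :=
  (∑ i, m i * w i * p i ≤ M) ∧ ∀ i, 0 ≤ p i ∧ p i ≤ 1

/-- Defender payoff. -/
def Ud {N : ℕ} (r w CD : Fin N → ℝ) (m p : Fin N → ℝ) : ℝ :=
  ∑ i, (m i * (p i * r i * w i - CD i) - p i * r i)

/-- Attacker payoff. -/
def Ua {N : ℕ} (r w CA : Fin N → ℝ) (m p : Fin N → ℝ) : ℝ :=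
  ∑ i, p i * (r i - m i * (r i * w i + CA i))

/-- Nash Equilibrium of the simplified game. -/
def IsNE {N : ℕ} (r w CA CD : Fin N → ℝ) (B M : ℝ) (m p : Fin N → ℝ) : Prop :=
  DefFeasible w B m ∧ AtkFeasible w M m p ∧
    (∀ m', DefFeasible w B m' → Ud r w CD m' p ≤ Ud r w CD m p) ∧
    (∀ p', AtkFeasible w M m p' → Ua r w CA m p' ≤ Ua r w CA m p)

lemma sum_update_eq {N : ℕ} (g : Fin N → ℝ → ℝ) (f : Fin N → ℝ) (i : Fin N) (a : ℝ) :
    ∑ j, g j (Function.update f i a j) = (∑ j, g j (f j)) - g i (f i) + g i a := by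
  have hfun : (fun j => g j (Function.update f i a j))
      = Function.update (fun j => g j (f j)) i (g i a) := by
    funext j
    rcases eq_or_ne j i with rfl | h
    · simp
    · rw [Function.update_of_ne h, Function.update_of_ne h]
  rw [hfun, Finset.sum_update_of_mem (Finset.mem_univ i),
      ← Finset.sum_erase_add Finset.univ _ (Finset.mem_univ i)]
  simp [Finset.sdiff_singleton_eq_erase]
  ring

/-- In any Nash Equilibrium of the simplified game,
`m_i ≤ r_i / (r_i w_i + C_i^A)` and `p_i ≥ C_i^D / (r_i w_i)` for every node `i`. -/
theorem ne_range {N : ℕ} (r w CA CD : Fin N → ℝ) (B M : ℝ)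
    (hr : ∀ i, 0 < r i) (hw : ∀ i, 0 < w i) (hCA : ∀ i, 0 < CA i) (hCD : ∀ i, 0 < CD i)
    (hCDr : ∀ i, CD i / (r i * w i) ≤ 1) (hB : 0 < B) (hM : 0 < M)
    (m p : Fin N → ℝ) (hNE : IsNE r w CA CD B M m p) :
    ∀ i, m i ≤ r i / (r i * w i + CA i) ∧ CD i / (r i * w i) ≤ p i := by
  obtain ⟨⟨hmB, hmBd⟩, ⟨hpM, hpBd⟩, hD, hA⟩ := hNE
  intro i
  have hrw : (0:ℝ) < r i * w i := mul_pos (hr i) (hw i)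
  have hden : (0:ℝ) < r i * w i + CA i := by linarith [hCA i]
  -- defender deviation to 0 at i
  have hfm0 : DefFeasible w B (Function.update m i 0) := by
    constructor
    · have h := sum_update_eq (fun _ x => x) m i 0
      rw [show (∑ j, Function.update m i 0 j) = (∑ j, m j) - m i + 0 from h]
      linarith [(hmBd i).1]
    · intro j
      rcases eq_or_ne j i with rfl | hji
      · rw [Function.update_self]
        exact ⟨le_refl 0, (one_div_pos.mpr (hw _)).le⟩
      · rw [Function.update_of_ne hji]; exact hmBd j
  have hkD : 0 ≤ m i * (p i * r i * w i - CD i) := by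
    have h := hD _ hfm0
    have he : Ud r w CD (Function.update m i 0) p
        = Ud r w CD m p - (m i * (p i * r i * w i - CD i) - p i * r i)
          + (0 * (p i * r i * w i - CD i) - p i * r i) :=
      sum_update_eq (fun j x => x * (p j * r j * w j - CD j) - p j * r j) m i 0
    rw [he] at h; linarith
  -- attacker deviation to 0 at i
  have hfp0 : AtkFeasible w M m (Function.update p i 0) := by
    constructor
    · have he : (∑ j, m j * w j * Function.update p i 0 j)
          = (∑ j, m j * w j * p j) - m i * w i * p i + m i * w i * 0 :=
        sum_update_eq (fun j x => m j * w j * x) p i 0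
      rw [he]
      have h0 : 0 ≤ m i * w i * p i := by
        have h1 := (hmBd i).1; have h2 := (hpBd i).1; have h3 := (hw i).le; positivity
      linarith
    · intro j; rcases eq_or_ne j i with rfl | hji
      · rw [Function.update_self]; exact ⟨le_refl 0, zero_le_one⟩
      · rw [Function.update_of_ne hji]; exact hpBd j
  have hkA : 0 ≤ p i * (r i - m i * (r i * w i + CA i)) := by
    have h := hA _ hfp0
    have he : Ua r w CA m (Function.update p i 0)
        = Ua r w CA m p - p i * (r i - m i * (r i * w i + CA i))
          + 0 * (r i - m i * (r i * w i + CA i)) :=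
      sum_update_eq (fun j x => x * (r j - m j * (r j * w j + CA j))) p i 0
    rw [he] at h; linarith
  -- Part 1
  have hm1 : m i ≤ r i / (r i * w i + CA i) := by
    by_contra h
    push_neg at h
    have hc : r i - m i * (r i * w i + CA i) < 0 := by
      have := (div_lt_iff₀ hden).mp h
      linarith
    have hp0 : p i = 0 := by
      by_contra hp
      have hp' : 0 < p i := lt_of_le_of_ne (hpBd i).1 (Ne.symm hp)
      nlinarith
    have hm0 : 0 < m i := lt_trans (div_pos (hr i) hden) h
    rw [hp0] at hkD
    nlinarith [hCD i]
  refine ⟨hm1, ?_⟩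
  -- Part 2
  by_contra h
  push_neg at h
  have hpc : p i * (r i * w i) < CD i := (lt_div_iff₀ hrw).mp h
  have hm0 : m i = 0 := by
    by_contra hm
    have hm' : 0 < m i := lt_of_le_of_ne (hmBd i).1 (Ne.symm hm)
    nlinarith
  have hfp1 : AtkFeasible w M m (Function.update p i 1) := by
    constructor
    · have he : (∑ j, m j * w j * Function.update p i 1 j)
          = (∑ j, m j * w j * p j) - m i * w i * p i + m i * w i * 1 :=
        sum_update_eq (fun j x => m j * w j * x) p i 1
      rw [he, hm0]
      ring_nf
      linarith [hpM]
    · intro j; rcases eq_or_ne j i with rfl | hji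
      · rw [Function.update_self]; exact ⟨zero_le_one, le_refl 1⟩
      · rw [Function.update_of_ne hji]; exact hpBd j
  have hk1 := hA _ hfp1
  have he : Ua r w CA m (Function.update p i 1)
      = Ua r w CA m p - p i * (r i - m i * (r i * w i + CA i))
        + 1 * (r i - m i * (r i * w i + CA i)) :=
    sum_update_eq (fun j x => x * (r j - m j * (r j * w j + CA j))) p i 1
  rw [he, hm0] at hk1
  have hp1 : 1 ≤ p i := by nlinarith [hr i]
  linarith [hCDr i]
end

section
/- In any Nash Equilibrium (m, p) of the simplified game, if node i has μ_i(p) < max_j μ_j(p), then m_i = 0 and p_i = 1. -/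
/-!
Both payoffs are linear in the player's own strategy, with coefficient `μ_j(p)` for the defender
and `r_j - m_j (r_j w_j + C_j^A)` for the attacker, so every equilibrium condition follows from a
one- or two-coordinate deviation. Take `k` maximising `μ`. A fully defended node (`m_k = 1 / w_k`)
has negative attacker coefficient, hence `p_k = 0` and `μ_k = -C_k^D < 0`, which the defender would
not pay for; so `m_k < 1 / w_k`. Moving defence from `i` to `k` then gains `μ_k - μ_i > 0` per
unit, forcing `m_i = 0`; and a node with `m_i = 0` costs the attacker nothing, so `p_i = 1`.
-/

open Finset

section Deviations

variable {ι : Type*} [Fintype ι] [DecidableEq ι]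

theorem sum_update_sub_mul (f c : ι → ℝ) (k : ι) (x : ℝ) :
    ∑ j, (Function.update f k x j - f j) * c j = (x - f k) * c k := by
  rw [sum_eq_single k fun j _ hj => by simp [hj]] <;> simp

theorem sum_transfer_sub_mul (f c : ι → ℝ) (i k : ι) (a : ℝ) :
    ∑ j, ((f + Pi.single k a - Pi.single i a : ι → ℝ) j - f j) * c j = a * c k - a * c i := by
  simp [sub_mul, sum_sub_distrib, Pi.single_apply, add_sub_assoc]

end Deviations

section Payoffs

variable {N : ℕ}

/-- The paper's `μ_j(p)`: the defender's marginal payoff per unit of `m_j`. -/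
def defMarginal (r w CD p : Fin N → ℝ) (j : Fin N) : ℝ :=
  p j * r j * w j - CD j

def atkMarginal (r w CA m : Fin N → ℝ) (j : Fin N) : ℝ :=
  r j - m j * (r j * w j + CA j)

theorem Ud_sub_Ud (r w CD m m' p : Fin N → ℝ) :
    Ud r w CD m' p - Ud r w CD m p = ∑ j, (m' j - m j) * defMarginal r w CD p j := by
  unfold Ud defMarginal
  rw [← sum_sub_distrib]
  exact sum_congr rfl fun _ _ => by ring

theorem Ua_sub_Ua (r w CA m p p' : Fin N → ℝ) :
    Ua r w CA m p' - Ua r w CA m p = ∑ j, (p' j - p j) * atkMarginal r w CA m j := by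
  unfold Ua atkMarginal
  rw [← sum_sub_distrib]
  exact sum_congr rfl fun _ _ => by ring

end Payoffs

section Defender

variable {N : ℕ} {r w CD : Fin N → ℝ} {B : ℝ} {m p : Fin N → ℝ}

def IsDefBestResponse (r w CD : Fin N → ℝ) (B : ℝ) (m p : Fin N → ℝ) : Prop :=
  DefFeasible w B m ∧ ∀ m', DefFeasible w B m' → Ud r w CD m' p ≤ Ud r w CD m p

theorem DefFeasible.transfer (hm : DefFeasible w B m) {i k : Fin N} {ε : ℝ} (hε : 0 ≤ ε)
    (hεi : ε ≤ m i) (hεk : m k + ε ≤ 1 / w k) :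
    DefFeasible w B (m + Pi.single k ε - Pi.single i ε) := by
  refine ⟨?_, fun j => ?_⟩
  · simpa [sum_add_distrib, sum_sub_distrib] using hm.1
  · have := hm.2 j
    simp only [Pi.sub_apply, Pi.add_apply, Pi.single_apply]
    split_ifs <;> subst_vars <;> constructor <;> linarith

theorem DefFeasible.update_zero (hm : DefFeasible w B m) (k : Fin N) :
    DefFeasible w B (Function.update m k 0) := by
  refine ⟨?_, fun j => ?_⟩
  · calc ∑ j, Function.update m k 0 j ≤ ∑ j, m j :=
          sum_le_sum fun j _ => by
            rcases eq_or_ne j k with rfl | hj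
            · simpa using (hm.2 j).1
            · simp [hj]
      _ ≤ B := hm.1
  · rcases eq_or_ne j k with rfl | hj
    · simpa using (hm.2 j).1.trans (hm.2 j).2
    · simpa [hj] using hm.2 j

theorem IsDefBestResponse.defMarginal_nonneg (h : IsDefBestResponse r w CD B m p) {k : Fin N}
    (hk : 0 < m k) : 0 ≤ defMarginal r w CD p k := by
  have hdev := sub_nonpos.2 (h.2 _ (h.1.update_zero k))
  rw [Ud_sub_Ud, sum_update_sub_mul] at hdev
  nlinarith

theorem IsDefBestResponse.eq_zero_of_defMarginal_lt (h : IsDefBestResponse r w CD B m p)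
    {i k : Fin N} (hk : m k < 1 / w k)
    (hlt : defMarginal r w CD p i < defMarginal r w CD p k) : m i = 0 := by
  by_contra hne
  have hi : 0 < m i := (h.1.2 i).1.lt_of_ne' hne
  set ε := min (m i) (1 / w k - m k)
  have hε : 0 < ε := lt_min hi (sub_pos.2 hk)
  have hdev := sub_nonpos.2 (h.2 _ (h.1.transfer hε.le (min_le_left _ _)
    (le_sub_iff_add_le'.1 (min_le_right _ _))))
  rw [Ud_sub_Ud, sum_transfer_sub_mul] at hdev
  linarith [mul_pos hε (sub_pos.2 hlt)]

end Defender

section Attacker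

variable {N : ℕ} {r w CA : Fin N → ℝ} {M : ℝ} {m p : Fin N → ℝ}

def IsAtkBestResponse (r w CA : Fin N → ℝ) (M : ℝ) (m p : Fin N → ℝ) : Prop :=
  AtkFeasible w M m p ∧ ∀ p', AtkFeasible w M m p' → Ua r w CA m p' ≤ Ua r w CA m p

theorem AtkFeasible.update (hp : AtkFeasible w M m p) {k : Fin N} {x : ℝ} (hx₀ : 0 ≤ x)
    (hx₁ : x ≤ 1) (hcost : m k * w k * x ≤ m k * w k * p k) :
    AtkFeasible w M m (Function.update p k x) := by
  refine ⟨?_, fun j => ?_⟩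
  · have hdiff := sum_update_sub_mul p (fun j => m j * w j) k x
    calc ∑ j, m j * w j * Function.update p k x j
        = ∑ j, m j * w j * p j + ∑ j, (Function.update p k x j - p j) * (m j * w j) := by
          rw [← sum_add_distrib]
          exact sum_congr rfl fun _ _ => by ring
      _ ≤ M := by linarith [hp.1]
  · rcases eq_or_ne j k with rfl | hj
    · simpa using ⟨hx₀, hx₁⟩
    · simpa [hj] using hp.2 j

theorem IsAtkBestResponse.eq_zero_of_atkMarginal_neg (h : IsAtkBestResponse r w CA M m p)
    {k : Fin N} (hmw : 0 ≤ m k * w k) (hk : atkMarginal r w CA m k < 0) : p k = 0 := by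
  have hpk := (h.1.2 k).1
  have hdev := sub_nonpos.2
    (h.2 _ (h.1.update le_rfl zero_le_one (by simpa using mul_nonneg hmw hpk)))
  rw [Ua_sub_Ua, sum_update_sub_mul] at hdev
  nlinarith

theorem IsAtkBestResponse.eq_one_of_atkMarginal_pos (h : IsAtkBestResponse r w CA M m p)
    {i : Fin N} (hm : m i = 0) (hi : 0 < atkMarginal r w CA m i) : p i = 1 := by
  have hpi := (h.1.2 i).2
  have hdev := sub_nonpos.2 (h.2 _ (h.1.update (k := i) zero_le_one le_rfl (by simp [hm])))
  rw [Ua_sub_Ua, sum_update_sub_mul] at hdev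
  nlinarith

end Attacker

namespace IsNE

variable {N : ℕ} {r w CA CD : Fin N → ℝ} {B M : ℝ} {m p : Fin N → ℝ}

theorem isDefBestResponse (h : IsNE r w CA CD B M m p) : IsDefBestResponse r w CD B m p :=
  ⟨h.1, h.2.2.1⟩

theorem isAtkBestResponse (h : IsNE r w CA CD B M m p) : IsAtkBestResponse r w CA M m p :=
  ⟨h.2.1, h.2.2.2⟩

theorem lt_one_div (h : IsNE r w CA CD B M m p) {k : Fin N} (hw : 0 < w k) (hCA : 0 < CA k)
    (hCD : 0 < CD k) : m k < 1 / w k := by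
  refine (h.1.2 k).2.lt_of_ne fun hfull => ?_
  have hatk : atkMarginal r w CA m k = -(CA k / w k) := by
    rw [atkMarginal, hfull]
    field_simp
    ring
  have hp : p k = 0 := h.isAtkBestResponse.eq_zero_of_atkMarginal_neg
    (by rw [hfull]; positivity) (by rw [hatk]; exact neg_neg_of_pos (div_pos hCA hw))
  have hμ := h.isDefBestResponse.defMarginal_nonneg (by rw [hfull]; positivity)
  rw [defMarginal, hp] at hμ
  linarith

end IsNE

theorem ne_nonmax_mu_general {N : ℕ} (hN : 0 < N) (r w CA CD : Fin N → ℝ) (B M : ℝ)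
    (hr : ∀ i, 0 < r i) (hw : ∀ i, 0 < w i) (hCA : ∀ i, 0 < CA i) (hCD : ∀ i, 0 < CD i)
    (m p : Fin N → ℝ) (hNE : IsNE r w CA CD B M m p)
    (i : Fin N)
    (hlt : p i * r i * w i - CD i <
      Finset.univ.sup' ⟨⟨0, hN⟩, Finset.mem_univ _⟩ (fun j => p j * r j * w j - CD j)) :
    m i = 0 ∧ p i = 1 := by
  obtain ⟨k, -, hk⟩ := exists_mem_eq_sup' ⟨⟨0, hN⟩, mem_univ _⟩ (defMarginal r w CD p)
  have hmi : m i = 0 :=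
    hNE.isDefBestResponse.eq_zero_of_defMarginal_lt (hNE.lt_one_div (hw k) (hCA k) (hCD k))
      (hk ▸ hlt)
  refine ⟨hmi, hNE.isAtkBestResponse.eq_one_of_atkMarginal_pos hmi ?_⟩
  simpa [atkMarginal, hmi] using hr i

/-- In any Nash Equilibrium, any node `i` whose coefficient `μ_i(p) = p_i r_i w_i - C_i^D`
is strictly below the maximum `max_j μ_j(p)` has `m_i = 0` and `p_i = 1`. -/
theorem ne_nonmax_mu {N : ℕ} (hN : 0 < N) (r w CA CD : Fin N → ℝ) (B M : ℝ)
    (hr : ∀ i, 0 < r i) (hw : ∀ i, 0 < w i) (hCA : ∀ i, 0 < CA i) (hCD : ∀ i, 0 < CD i)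
    (hCDr : ∀ i, CD i / (r i * w i) ≤ 1) (hB : 0 < B) (hM : 0 < M)
    (m p : Fin N → ℝ) (hNE : IsNE r w CA CD B M m p)
    (i : Fin N)
    (hlt : p i * r i * w i - CD i <
      Finset.univ.sup' ⟨⟨0, hN⟩, Finset.mem_univ _⟩ (fun j => p j * r j * w j - CD j)) :
    m i = 0 ∧ p i = 1 :=
  ne_nonmax_mu_general hN r w CA CD B M hr hw hCA hCD m p hNE i hlt
end

section
/- In any Nash Equilibrium (m, p) of the simplified game, with F = {i : μ_i(p) = max_j μ_j(p)} and D = {i ∈ F : ρ_i(m) = min_{j∈F} ρ_j(m)} where ρ_i(m) = (r_i − m_i(r_i·w_i + C_i^A))/(m_i·w_i), we have: for all i ∈ D, j ∈ F∖D, and k ∉ F, r_i·w_i − C_i^D ≥ r_j·w_j − C_j^D > r_k·w_k − C_k^D. -/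
/-- The ratio `ρ_i(m)` with the convention `ρ_i = +∞` when `m_i = 0`. -/
noncomputable def rho {N : ℕ} (r w CA : Fin N → ℝ) (m : Fin N → ℝ) (i : Fin N) : EReal :=
  if m i = 0 then ⊤ else ((r i - m i * (r i * w i + CA i)) / (m i * w i) : ℝ)

/-- Sum of a pointwise function after updating one coordinate. -/
lemma sum_apply_update {N : ℕ} (f : Fin N → ℝ → ℝ) (p : Fin N → ℝ) (l : Fin N) (v : ℝ) :
    ∑ x, f x (Function.update p l v x) = (∑ x, f x (p x)) + (f l v - f l (p l)) := by
  classical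
  rw [← Finset.add_sum_erase _ (fun x => f x (Function.update p l v x)) (Finset.mem_univ l),
      ← Finset.add_sum_erase _ (fun x => f x (p x)) (Finset.mem_univ l)]
  have h : ∑ x ∈ Finset.univ.erase l, f x (Function.update p l v x)
      = ∑ x ∈ Finset.univ.erase l, f x (p x) :=
    Finset.sum_congr rfl fun x hx => by
      rw [Function.update_of_ne (Finset.ne_of_mem_erase hx)]
  rw [h, Function.update_self]
  ring

lemma cost_update {N : ℕ} (w : Fin N → ℝ) (m p : Fin N → ℝ) (l : Fin N) (v : ℝ) :
    ∑ x, m x * w x * Function.update p l v x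
      = (∑ x, m x * w x * p x) + m l * w l * (v - p l) := by
  have h : ∑ x, m x * w x * Function.update p l v x
      = (∑ x, m x * w x * p x) + (m l * w l * v - m l * w l * p l) :=
    sum_apply_update (fun x t => m x * w x * t) p l v
  rw [h]; ring

lemma ua_update {N : ℕ} (r w CA : Fin N → ℝ) (m p : Fin N → ℝ) (l : Fin N) (v : ℝ) :
    Ua r w CA m (Function.update p l v)
      = Ua r w CA m p + (v - p l) * (r l - m l * (r l * w l + CA l)) := by
  have h : ∑ x, Function.update p l v x * (r x - m x * (r x * w x + CA x))
      = (∑ x, p x * (r x - m x * (r x * w x + CA x)))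
        + (v * (r l - m l * (r l * w l + CA l)) - p l * (r l - m l * (r l * w l + CA l))) :=
    sum_apply_update (fun x t => t * (r x - m x * (r x * w x + CA x))) p l v
  unfold Ua
  rw [h]; ring

lemma bsum_update {N : ℕ} (m : Fin N → ℝ) (l : Fin N) (v : ℝ) :
    ∑ x, Function.update m l v x = (∑ x, m x) + (v - m l) := by
  have h : ∑ x, Function.update m l v x = (∑ x, m x) + (v - m l) :=
    sum_apply_update (fun _ t => t) m l v
  exact h

lemma ud_update {N : ℕ} (r w CD : Fin N → ℝ) (m p : Fin N → ℝ) (l : Fin N) (v : ℝ) :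
    Ud r w CD (Function.update m l v) p
      = Ud r w CD m p + (v - m l) * (p l * r l * w l - CD l) := by
  have h : ∑ x, (Function.update m l v x * (p x * r x * w x - CD x) - p x * r x)
      = (∑ x, (m x * (p x * r x * w x - CD x) - p x * r x))
        + ((v * (p l * r l * w l - CD l) - p l * r l)
            - (m l * (p l * r l * w l - CD l) - p l * r l)) :=
    sum_apply_update (fun x t => t * (p x * r x * w x - CD x) - p x * r x) m l v
  unfold Ud
  rw [h]; ring

/-- Attacker: an undefended node is fully attacked. -/
lemma free_node {N : ℕ} (r w CA CD : Fin N → ℝ) (B M : ℝ) (m p : Fin N → ℝ)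
    (hr : ∀ i, 0 < r i) (hNE : IsNE r w CA CD B M m p) (l : Fin N) (hm : m l = 0) :
    p l = 1 := by
  obtain ⟨-, ⟨hbud, hbox⟩, -, hA⟩ := hNE
  by_contra h
  have hpl : p l < 1 := lt_of_le_of_ne (hbox l).2 h
  have hfeas : AtkFeasible w M m (Function.update p l 1) := by
    constructor
    · rw [cost_update]
      simpa [hm] using hbud
    · intro x
      rcases eq_or_ne x l with hx | hx
      · rw [hx, Function.update_self]; exact ⟨zero_le_one, le_refl 1⟩
      · rw [Function.update_of_ne hx]; exact hbox x
  have hlt : Ua r w CA m p < Ua r w CA m (Function.update p l 1) := by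
    rw [ua_update, hm]
    nlinarith [hr l]
  exact absurd (hA _ hfeas) (not_le.mpr hlt)

/-- Attacker: a node with negative attack value is not attacked. -/
lemma atk_drop {N : ℕ} (r w CA CD : Fin N → ℝ) (B M : ℝ) (m p : Fin N → ℝ)
    (hw : ∀ i, 0 < w i) (hNE : IsNE r w CA CD B M m p) (l : Fin N)
    (ha : r l - m l * (r l * w l + CA l) < 0) (hpl : 0 < p l) : False := by
  obtain ⟨⟨-, hmbox⟩, ⟨hbud, hbox⟩, -, hA⟩ := hNE
  have hfeas : AtkFeasible w M m (Function.update p l 0) := by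
    constructor
    · rw [cost_update]
      have : m l * w l * (0 - p l) ≤ 0 := by
        have h1 : 0 ≤ m l * w l := mul_nonneg (hmbox l).1 (hw l).le
        nlinarith
      linarith
    · intro x
      rcases eq_or_ne x l with hx | hx
      · rw [hx, Function.update_self]; exact ⟨le_refl 0, zero_le_one⟩
      · rw [Function.update_of_ne hx]; exact hbox x
  have hlt : Ua r w CA m p < Ua r w CA m (Function.update p l 0) := by
    rw [ua_update]
    nlinarith
  exact absurd (hA _ hfeas) (not_le.mpr hlt)

/-- Attacker: if node `i` is attacked with positive intensity but node `l` has a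
strictly better value/cost ratio, then `l` is fully attacked. -/
lemma atk_swap {N : ℕ} (r w CA CD : Fin N → ℝ) (B M : ℝ) (m p : Fin N → ℝ)
    (hw : ∀ i, 0 < w i) (hNE : IsNE r w CA CD B M m p) (i l : Fin N)
    (hmi : 0 < m i) (hml : 0 < m l)
    (hrat : (r i - m i * (r i * w i + CA i)) / (m i * w i)
          < (r l - m l * (r l * w l + CA l)) / (m l * w l))
    (hpi : 0 < p i) : p l = 1 := by
  obtain ⟨-, ⟨hbud, hbox⟩, -, hA⟩ := hNE
  by_contra h
  have hpl : p l < 1 := lt_of_le_of_ne (hbox l).2 h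
  have hil : i ≠ l := by rintro rfl; exact absurd hrat (lt_irrefl _)
  set ci : ℝ := m i * w i with hci
  set cl : ℝ := m l * w l with hcl
  have hcip : 0 < ci := mul_pos hmi (hw i)
  have hclp : 0 < cl := mul_pos hml (hw l)
  set ε : ℝ := min (p i * ci) ((1 - p l) * cl) with hε
  have hεp : 0 < ε := lt_min (mul_pos hpi hcip) (mul_pos (by linarith) hclp)
  set q : Fin N → ℝ := Function.update p i (p i - ε / ci) with hq
  set p' : Fin N → ℝ := Function.update q l (p l + ε / cl) with hp'
  have hql : q l = p l := Function.update_of_ne (Ne.symm hil) _ _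
  have hεci : ε / ci ≤ p i := by
    rw [div_le_iff₀ hcip]; exact min_le_left _ _
  have hεcl : ε / cl ≤ 1 - p l := by
    rw [div_le_iff₀ hclp]; exact min_le_right _ _
  have hfeas : AtkFeasible w M m p' := by
    constructor
    · rw [hp', cost_update, hql, hq, cost_update]
      have e1 : m l * w l * (p l + ε / cl - p l) = ε := by
        rw [← hcl, show p l + ε / cl - p l = ε / cl from by ring,
          mul_div_cancel₀ _ hclp.ne']
      have e2 : m i * w i * (p i - ε / ci - p i) = -ε := by
        rw [← hci, show p i - ε / ci - p i = -(ε / ci) from by ring, mul_neg,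
          mul_div_cancel₀ _ hcip.ne']
      rw [e1, e2]; linarith
    · intro x
      rcases eq_or_ne x l with hxl | hxl
      · rw [hxl, hp', Function.update_self]
        have h0 : 0 ≤ ε / cl := div_nonneg hεp.le hclp.le
        exact ⟨by linarith [(hbox l).1], by linarith⟩
      · rw [hp', Function.update_of_ne hxl]
        rcases eq_or_ne x i with hxi | hxi
        · rw [hxi, hq, Function.update_self]
          have h0 : 0 ≤ ε / ci := div_nonneg hεp.le hcip.le
          exact ⟨by linarith, by linarith [(hbox i).2]⟩
        · rw [hq, Function.update_of_ne hxi]; exact hbox x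
  have hlt : Ua r w CA m p < Ua r w CA m p' := by
    rw [hp', ua_update, hql, hq, ua_update]
    have e1 : (p l + ε / cl - p l) * (r l - m l * (r l * w l + CA l))
        = ε * ((r l - m l * (r l * w l + CA l)) / cl) := by ring
    have e2 : (p i - ε / ci - p i) * (r i - m i * (r i * w i + CA i))
        = -(ε * ((r i - m i * (r i * w i + CA i)) / ci)) := by ring
    rw [e1, e2]
    have := mul_lt_mul_of_pos_left hrat hεp
    linarith
  exact absurd (hA _ hfeas) (not_le.mpr hlt)

/-- Defender: any defended node has nonnegative marginal value `μ_l`. -/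
lemma def_nonneg {N : ℕ} (r w CA CD : Fin N → ℝ) (B M : ℝ) (m p : Fin N → ℝ)
    (hw : ∀ i, 0 < w i) (hNE : IsNE r w CA CD B M m p) (l : Fin N)
    (hml : 0 < m l) : 0 ≤ p l * r l * w l - CD l := by
  obtain ⟨⟨hbud, hbox⟩, -, hDopt, -⟩ := hNE
  by_contra h
  have hμ : p l * r l * w l - CD l < 0 := lt_of_not_ge h
  have hfeas : DefFeasible w B (Function.update m l 0) := by
    constructor
    · rw [bsum_update]; linarith
    · intro x
      rcases eq_or_ne x l with hx | hx
      · rw [hx, Function.update_self]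
        refine ⟨le_refl 0, ?_⟩
        have := hw l; positivity
      · rw [Function.update_of_ne hx]; exact hbox x
  have hlt : Ud r w CD m p < Ud r w CD (Function.update m l 0) p := by
    rw [ud_update]
    nlinarith
  exact absurd (hDopt _ hfeas) (not_le.mpr hlt)

/-- Defender: budget cannot sit on a node with strictly smaller `μ` than an
unsaturated node. -/
lemma def_move {N : ℕ} (r w CA CD : Fin N → ℝ) (B M : ℝ) (m p : Fin N → ℝ)
    (hw : ∀ i, 0 < w i) (hNE : IsNE r w CA CD B M m p) (k i : Fin N)
    (hmk : 0 < m k) (hmi : m i < 1 / w i)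
    (hμ : p k * r k * w k - CD k < p i * r i * w i - CD i) : False := by
  obtain ⟨⟨hbud, hbox⟩, -, hDopt, -⟩ := hNE
  have hki : k ≠ i := by rintro rfl; exact absurd hμ (lt_irrefl _)
  set δ : ℝ := min (m k) (1 / w i - m i) with hδ
  have hδp : 0 < δ := lt_min hmk (by linarith)
  have hδk : δ ≤ m k := min_le_left _ _
  have hδi : δ ≤ 1 / w i - m i := min_le_right _ _
  set q : Fin N → ℝ := Function.update m k (m k - δ) with hq
  set m' : Fin N → ℝ := Function.update q i (m i + δ) with hm'
  have hqi : q i = m i := Function.update_of_ne (Ne.symm hki) _ _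
  have hfeas : DefFeasible w B m' := by
    constructor
    · rw [hm', bsum_update, hqi, hq, bsum_update]
      linarith
    · intro x
      rcases eq_or_ne x i with hxi | hxi
      · rw [hxi, hm', Function.update_self]
        exact ⟨by linarith [(hbox i).1], by linarith⟩
      · rw [hm', Function.update_of_ne hxi]
        rcases eq_or_ne x k with hxk | hxk
        · rw [hxk, hq, Function.update_self]
          exact ⟨by linarith, by linarith [(hbox k).2]⟩
        · rw [hq, Function.update_of_ne hxk]; exact hbox x
  have hlt : Ud r w CD m p < Ud r w CD m' p := by
    rw [hm', ud_update, hqi, hq, ud_update]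
    nlinarith
  exact absurd (hDopt _ hfeas) (not_le.mpr hlt)

/-- In any Nash Equilibrium, with `F` the set of nodes with maximal `μ_i(p)` and
`D ⊆ F` those with minimal `ρ_i(m)` within `F`, for `i ∈ D`, `j ∈ F \ D` and `k ∉ F`
we have `r_i w_i - C_i^D ≥ r_j w_j - C_j^D > r_k w_k - C_k^D`. -/
theorem ne_order {N : ℕ} (r w CA CD : Fin N → ℝ) (B M : ℝ)
    (hr : ∀ i, 0 < r i) (hw : ∀ i, 0 < w i) (hCA : ∀ i, 0 < CA i) (hCD : ∀ i, 0 < CD i)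
    (hCDr : ∀ i, CD i / (r i * w i) ≤ 1) (hB : 0 < B) (hM : 0 < M)
    (m p : Fin N → ℝ) (hNE : IsNE r w CA CD B M m p)
    (F D : Set (Fin N))
    (hF : F = {i | ∀ j, p j * r j * w j - CD j ≤ p i * r i * w i - CD i})
    (hD : D = {i | i ∈ F ∧ ∀ j ∈ F, rho r w CA m i ≤ rho r w CA m j}) :
    ∀ i ∈ D, ∀ j, j ∈ F → j ∉ D → ∀ k, k ∉ F →
      r j * w j - CD j ≤ r i * w i - CD i ∧
        r k * w k - CD k < r j * w j - CD j := by
  subst hF hD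
  intro i hi j hjF hjD k hkF
  simp only [Set.mem_setOf_eq] at hi hjF hjD hkF
  obtain ⟨hiF, hiMin⟩ := hi
  have hmnn : ∀ x, 0 ≤ m x := fun x => (hNE.1.2 x).1
  have hmub : ∀ x, m x ≤ 1 / w x := fun x => (hNE.1.2 x).2
  have hpnn : ∀ x, 0 ≤ p x := fun x => ((hNE.2.1).2 x).1
  have hpub : ∀ x, p x ≤ 1 := fun x => ((hNE.2.1).2 x).2
  -- rho i < rho j
  have hρij : rho r w CA m i < rho r w CA m j := by
    push_neg at hjD
    obtain ⟨l, hlF, hl⟩ := hjD hjF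
    exact lt_of_le_of_lt (hiMin l hlF) hl
  -- m i > 0
  have hmi : 0 < m i := by
    rcases (hmnn i).lt_or_eq with h | h
    · exact h
    · exfalso
      have : rho r w CA m i = ⊤ := by rw [rho, if_pos h.symm]
      exact absurd hρij (by rw [this]; exact not_top_lt)
  -- p i > 0 (since μ_i ≥ 0 and CD i > 0)
  have hμi : 0 ≤ p i * r i * w i - CD i :=
    def_nonneg r w CA CD B M m p hw hNE i hmi
  have hpi : 0 < p i := by nlinarith [hCD i, mul_pos (hr i) (hw i), hpnn i]
  -- Step 1 : p j = 1
  have hpj : p j = 1 := by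
    rcases eq_or_ne (m j) 0 with hmj | hmj
    · exact free_node r w CA CD B M m p hr hNE j hmj
    · have hmjp : 0 < m j := (hmnn j).lt_of_ne (Ne.symm hmj)
      have hρi : rho r w CA m i
          = ((r i - m i * (r i * w i + CA i)) / (m i * w i) : ℝ) := by
        rw [rho, if_neg hmi.ne']
      have hρj : rho r w CA m j
          = ((r j - m j * (r j * w j + CA j)) / (m j * w j) : ℝ) := by
        rw [rho, if_neg hmj]
      have hrat : (r i - m i * (r i * w i + CA i)) / (m i * w i)
          < (r j - m j * (r j * w j + CA j)) / (m j * w j) := by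
        rw [hρi, hρj] at hρij
        exact_mod_cast hρij
      exact atk_swap r w CA CD B M m p hw hNE i j hmi hmjp hrat hpi
  -- μ_k is strictly below μ of any member of F
  have hμk : ∀ l ∈ {i | ∀ j, p j * r j * w j - CD j ≤ p i * r i * w i - CD i},
      p k * r k * w k - CD k < p l * r l * w l - CD l := by
    intro l hl
    simp only [Set.mem_setOf_eq] at hl
    push_neg at hkF
    obtain ⟨x, hx⟩ := hkF
    exact lt_of_lt_of_le hx (hl x)
  have hμki : p k * r k * w k - CD k < p i * r i * w i - CD i := hμk i hiF
  have hμkj : p k * r k * w k - CD k < p j * r j * w j - CD j := hμk j hjF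
  -- Step 2 : p k = 1
  have hpk : p k = 1 := by
    by_contra h
    have hpkl : p k < 1 := lt_of_le_of_ne (hpub k) h
    -- m k > 0
    have hmk : 0 < m k := by
      rcases (hmnn k).lt_or_eq with h' | h'
      · exact h'
      · exact absurd (free_node r w CA CD B M m p hr hNE k h'.symm) h
    have hμknn : 0 ≤ p k * r k * w k - CD k :=
      def_nonneg r w CA CD B M m p hw hNE k hmk
    -- ratio k ≤ ratio i
    have hratki : (r k - m k * (r k * w k + CA k)) / (m k * w k)
        ≤ (r i - m i * (r i * w i + CA i)) / (m i * w i) := by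
      by_contra h'
      exact h (atk_swap r w CA CD B M m p hw hNE i k hmi hmk (lt_of_not_ge h') hpi)
    -- m i is saturated
    have hmisat : m i = 1 / w i := by
      rcases (hmub i).lt_or_eq with h' | h'
      · exact absurd (def_move r w CA CD B M m p hw hNE k i hmk h' hμki) not_false
      · exact h'
    -- ratio i < 0
    have hrati : (r i - m i * (r i * w i + CA i)) / (m i * w i) < 0 := by
      apply div_neg_of_neg_of_pos
      · rw [hmisat]
        have hwi := hw i
        have : 1 / w i * (r i * w i + CA i) = r i + CA i / w i := by field_simp
        rw [this]
        have := hCA i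
        have : 0 < CA i / w i := by positivity
        linarith
      · exact mul_pos hmi (hw i)
    -- hence a_k < 0
    have hak : r k - m k * (r k * w k + CA k) < 0 := by
      have hck : 0 < m k * w k := mul_pos hmk (hw k)
      by_contra h'
      have : 0 ≤ (r k - m k * (r k * w k + CA k)) / (m k * w k) :=
        div_nonneg (le_of_not_gt h') hck.le
      linarith
    -- so p k = 0, contradicting μ_k ≥ 0
    have hpk0 : p k = 0 := by
      rcases (hpnn k).lt_or_eq with h' | h'
      · exact absurd (atk_drop r w CA CD B M m p hw hNE k hak h') not_false
      · exact h'.symm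
    rw [hpk0] at hμknn
    nlinarith [hCD k]
  -- Conclusion
  have hμji : p j * r j * w j - CD j ≤ p i * r i * w i - CD i := hiF j
  rw [hpj] at hμji
  rw [hpj] at hμkj
  rw [hpk] at hμkj
  constructor
  · nlinarith [mul_pos (hr i) (hw i), hpub i]
  · linarith
end

section
/- The two-node game with parameters r_1 = r_2 = 1, w_1 = 2, w_2 = 1, C_1^D = 1/5, C_2^D = 4/5, C_1^A = 1, C_2^A = 7/2, B = 1/3, M = 1/5 has (at least) two Nash Equilibria with different defender payoffs: (m, p) = ((1/6, 1/6), (3/20, 9/10)) and (m, p) = ((1/3, 0), (1/4, 1)). -/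
/-- The two-node game with `r = (1,1)`, `w = (2,1)`, `C^D = (1/5, 4/5)`, `C^A = (1, 7/2)`,
`B = 1/3`, `M = 1/5` has two Nash Equilibria, `((1/6,1/6), (3/20,9/10))` and
`((1/3,0), (1/4,1))`, with different defender payoffs. -/
theorem two_node_multiple_ne :
    IsNE ![1, 1] ![2, 1] ![1, 7/2] ![1/5, 4/5] (1/3) (1/5)
        ![1/6, 1/6] ![3/20, 9/10] ∧
      IsNE ![1, 1] ![2, 1] ![1, 7/2] ![1/5, 4/5] (1/3) (1/5)
        ![1/3, 0] ![1/4, 1] ∧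
      Ud ![1, 1] ![2, 1] ![1/5, 4/5] ![1/6, 1/6] ![3/20, 9/10] ≠
        Ud ![1, 1] ![2, 1] ![1/5, 4/5] ![1/3, 0] ![1/4, 1] := by
  refine ⟨⟨⟨?_, ?_⟩, ⟨?_, ?_⟩, ?_, ?_⟩, ⟨⟨?_, ?_⟩, ⟨?_, ?_⟩, ?_, ?_⟩, ?_⟩
  · norm_num [Fin.sum_univ_two]
  · intro i; fin_cases i <;> norm_num
  · norm_num [Fin.sum_univ_two]
  · intro i; fin_cases i <;> norm_num
  · rintro m' ⟨hs, hb⟩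
    simp only [Fin.sum_univ_two] at hs
    obtain ⟨h00, h01⟩ := hb 0
    obtain ⟨h10, h11⟩ := hb 1
    simp only [Ud, Fin.sum_univ_two, Matrix.cons_val_zero, Matrix.cons_val_one,
      Matrix.head_cons] at *
    nlinarith
  · rintro p' ⟨hs, hb⟩
    simp only [Fin.sum_univ_two] at hs
    obtain ⟨h00, h01⟩ := hb 0
    obtain ⟨h10, h11⟩ := hb 1
    simp only [Ua, Fin.sum_univ_two, Matrix.cons_val_zero, Matrix.cons_val_one,
      Matrix.head_cons] at *
    nlinarith
  · norm_num [Fin.sum_univ_two]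
  · intro i; fin_cases i <;> norm_num
  · norm_num [Fin.sum_univ_two]
  · intro i; fin_cases i <;> norm_num
  · rintro m' ⟨hs, hb⟩
    simp only [Fin.sum_univ_two] at hs
    obtain ⟨h00, h01⟩ := hb 0
    obtain ⟨h10, h11⟩ := hb 1
    simp only [Ud, Fin.sum_univ_two, Matrix.cons_val_zero, Matrix.cons_val_one,
      Matrix.head_cons] at *
    nlinarith
  · rintro p' ⟨hs, hb⟩
    simp only [Fin.sum_univ_two] at hs
    obtain ⟨h00, h01⟩ := hb 0
    obtain ⟨h10, h11⟩ := hb 1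
    simp only [Ua, Fin.sum_univ_two, Matrix.cons_val_zero, Matrix.cons_val_one,
      Matrix.head_cons] at *
    nlinarith
  · simp only [Ud, Fin.sum_univ_two, Matrix.cons_val_zero, Matrix.cons_val_one,
      Matrix.head_cons]
    norm_num
end
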